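/- arXiv:1007.0508 — 2 statements merged into one kernel-verified Lean document; each statement's English description precedes it below -/
import Mathlib

section
/- Let B be an integral domain of characteristic zero, G a totally ordered abelian group, and deg : B → G ∪ {−∞} a degree function. Let A ⊆ Z be subrings of B such that deg(x) = 0 for all nonzero x ∈ A and all nonzero x ∈ Z. Suppose S is a nonempty subset of Z such that Z is algebraic over the subring A[S] generated by A and S. Then for every A-derivation D : B → B and every z ∈ Z there exists s ∈ S with δ_D(z) ≤ δ_D(s); consequently the set {δ_D(z) : z ∈ Z} has a greatest element if and only if the set {δ_D(s) : s ∈ S} does, and in that case the two greatest elements coincide. -/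
section DegreePrelude

variable {B : Type*} [CommRing B] {G : Type*} [AddCommGroup G] [LinearOrder G] [IsOrderedAddMonoid G]

/-- A degree function on `B` with values in `G ∪ {-∞}` -/
def IsDegreeFunction (deg : B → WithBot G) : Prop :=
  (∀ x : B, deg x = ⊥ ↔ x = 0) ∧
  (∀ x y : B, deg (x * y) = deg x + deg y) ∧
  (∀ x y : B, deg (x + y) ≤ max (deg x) (deg y))

/-- `degDelta deg D x = deg (D x) - deg x` (with value `-∞` if `D x = 0`). -/
noncomputable def degDelta (deg : B → WithBot G) (D : B → B) (x : B) : WithBot G :=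
  (deg (D x)).map fun a => a - WithBot.unbotD 0 (deg x)

/-- The set `{deg (D x) - deg x : x ∈ B \ {0}}`. -/
def degDeltaSet (deg : B → WithBot G) (D : B → B) : Set (WithBot G) :=
  {m | ∃ x : B, x ≠ 0 ∧ degDelta deg D x = m}

/-- `deg (D)` is defined, i.e. the set `{deg (D x) - deg x : x ≠ 0}` has a
greatest element in `G ∪ {-∞}`. -/
def DegreeDefinedAt (deg : B → WithBot G) (D : B → B) : Prop :=
  ∃ M, IsGreatest (degDeltaSet deg D) M

end DegreePrelude

/-! On `Z` the degree vanishes, so `δ_D = deg ∘ D` there, and multiplication by an element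
of `Z` does not raise degrees. Hence every element of the `Z`-span of `D(S)` has degree at most
`deg (D s)` for some `s ∈ S`, and by the Leibniz rule `D` maps `A[S]` into that span.
For `z ∈ Z`, characteristic zero lets us replace an algebraic relation `p(z) = 0` over `A[S]`
by one with `p'(z) ≠ 0`; applying `D` to it gives `p'(z) · D z = -∑ zⁱ D(cᵢ)`, which lies in
the span, and `deg p'(z) = 0` turns this into the bound on `deg (D z)`. The statements about
greatest elements follow formally, since `S ⊆ Z`. -/

open Polynomial

namespace Polynomial

variable {B : Type*} [CommRing B] {R : Subring B} {p : B[X]}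

theorem coeff_derivative_mem_of_coeff_mem (hp : ∀ i, p.coeff i ∈ R) (i : ℕ) :
    p.derivative.coeff i ∈ R := by
  rw [coeff_derivative]
  exact mul_mem (hp _) (add_mem (natCast_mem R i) (one_mem R))

theorem eval_mem_of_coeff_mem (hp : ∀ i, p.coeff i ∈ R) {z : B} (hz : z ∈ R) :
    p.eval z ∈ R := by
  rw [eval_eq_sum_range]
  exact sum_mem fun i _ => mul_mem (hp i) (pow_mem hz i)

theorem exists_eval_derivative_ne_zero_of_coeff_mem [IsAddTorsionFree B] {z : B} (hp0 : p ≠ 0)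
    (hpR : ∀ i, p.coeff i ∈ R) (hpz : p.eval z = 0) :
    ∃ q : B[X], (∀ i, q.coeff i ∈ R) ∧ q.eval z = 0 ∧ q.derivative.eval z ≠ 0 := by
  induction hn : p.natDegree using Nat.strong_induction_on generalizing p with
  | _ n ih =>
  by_cases hp'z : p.derivative.eval z = 0
  · have hpn : p.natDegree ≠ 0 := fun h => hp0 <| by
      rw [eq_C_of_natDegree_eq_zero h, eval_C] at hpz
      rw [eq_C_of_natDegree_eq_zero h, hpz, C_0]
    exact ih _ (hn ▸ natDegree_derivative_lt hpn) (derivative_ne_zero.2 hpn)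
      (coeff_derivative_mem_of_coeff_mem hpR) hp'z rfl
  · exact ⟨p, hpR, hpz, hp'z⟩

end Polynomial

theorem isGreatest_iff_of_subset_of_forall_exists_le {α : Type*} [PartialOrder α] {T U : Set α}
    (hTU : T ⊆ U) (h : ∀ u ∈ U, ∃ t ∈ T, u ≤ t) {M : α} :
    IsGreatest U M ↔ IsGreatest T M := by
  refine ⟨fun hM => ?_, fun hM => ⟨hTU hM.1, fun u hu => ?_⟩⟩
  · obtain ⟨t, ht, hMt⟩ := h M hM.1
    exact ⟨le_antisymm (hM.2 (hTU ht)) hMt ▸ ht, fun t ht => hM.2 (hTU ht)⟩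
  · obtain ⟨t, ht, hut⟩ := h u hu
    exact hut.trans (hM.2 ht)

namespace Derivation

variable {R B : Type*} [CommRing R] [CommRing B] [Algebra R B] (D : Derivation R B B)
  {A Z : Subring B} {S : Set B}

theorem map_mem_span_of_mem_closure (hAZ : A ≤ Z) (hSZ : S ⊆ Z) (hDA : ∀ a ∈ A, D a = 0)
    {x : B} (hx : x ∈ Subring.closure (A ∪ S)) : D x ∈ Submodule.span Z (D '' S) := by
  have hcl : Subring.closure (A ∪ S) ≤ Z :=
    Subring.closure_le.2 (Set.union_subset hAZ hSZ)
  induction hx using Subring.closure_induction with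
  | mem x hx =>
    rcases hx with hxA | hxS
    · simp [hDA x hxA]
    · exact Submodule.subset_span ⟨x, hxS, rfl⟩
  | zero => simp
  | one => simp
  | add x y _ _ hx hy => simpa using add_mem hx hy
  | neg x _ hx => simpa using neg_mem hx
  | mul x y hxc hyc hx hy =>
    rw [D.leibniz]
    exact add_mem (Submodule.smul_mem _ (⟨x, hcl hxc⟩ : Z) hy)
      (Submodule.smul_mem _ (⟨y, hcl hyc⟩ : Z) hx)

theorem eval_derivative_mul_mem_span (hAZ : A ≤ Z) (hSZ : S ⊆ Z) (hDA : ∀ a ∈ A, D a = 0)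
    {z : B} (hz : z ∈ Z) {p : B[X]} (hp : ∀ i, p.coeff i ∈ Subring.closure (A ∪ S))
    (hpz : p.eval z = 0) : p.derivative.eval z * D z ∈ Submodule.span Z (D '' S) := by
  have h : p.derivative.eval z • D z = -PolynomialModule.eval z (D.mapCoeffs p) :=
    eq_neg_of_add_eq_zero_right (by rw [← D.apply_eval_eq, hpz, map_zero])
  rw [← smul_eq_mul, h, PolynomialModule.eval_apply]
  refine neg_mem (Submodule.finsuppSum_mem _ _ _ _ fun i _ => ?_)
  exact Submodule.smul_mem _ ((⟨z, hz⟩ : Z) ^ i)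
    (D.map_mem_span_of_mem_closure hAZ hSZ hDA (hp i))

end Derivation

namespace IsDegreeFunction

variable {B : Type*} [CommRing B] {G : Type*} [AddCommGroup G] [LinearOrder G]
  {deg : B → WithBot G}

theorem deg_zero (hdeg : IsDegreeFunction deg) : deg 0 = ⊥ := (hdeg.1 0).2 rfl

theorem deg_mul_le_of_nonpos [IsOrderedAddMonoid G] (hdeg : IsDegreeFunction deg) {x : B}
    (hx : deg x ≤ 0) (y : B) :
    deg (x * y) ≤ deg y := by
  rw [hdeg.2.1]
  simpa using add_le_add_left hx (deg y)

theorem exists_deg_le_of_mem_span [IsOrderedAddMonoid G] (hdeg : IsDegreeFunction deg)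
    {Z : Subring B} (hZ : ∀ x ∈ Z, deg x ≤ 0) {V : Set B} (hV : V.Nonempty) {x : B}
    (hx : x ∈ Submodule.span Z V) : ∃ v ∈ V, deg x ≤ deg v := by
  induction hx using Submodule.span_induction with
  | mem x hx => exact ⟨x, hx, le_rfl⟩
  | zero => exact ⟨hV.some, hV.some_mem, hdeg.deg_zero ▸ bot_le⟩
  | add x y _ _ hx hy =>
    obtain ⟨v, hv, hxv⟩ := hx
    obtain ⟨w, hw, hyw⟩ := hy
    have hxy := hdeg.2.2 x y
    rcases le_total (deg v) (deg w) with hvw | hwv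
    · exact ⟨w, hw, hxy.trans (max_le (hxv.trans hvw) hyw)⟩
    · exact ⟨v, hv, hxy.trans (max_le hxv (hyw.trans hwv))⟩
  | smul a x _ hx =>
    obtain ⟨v, hv, hxv⟩ := hx
    exact ⟨v, hv, (hdeg.deg_mul_le_of_nonpos (hZ a a.2) x).trans hxv⟩


theorem degDelta_eq_of_deg_eq_zero (hdeg : IsDegreeFunction deg) (D : B → B) {x : B}
    (hx : x ≠ 0 → deg x = 0) : degDelta deg D x = deg (D x) := by
  have h : WithBot.unbotD 0 (deg x) = 0 := by
    rcases eq_or_ne x 0 with rfl | hx0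
    · rw [hdeg.deg_zero]; rfl
    · rw [hx hx0]; rfl
  simp only [degDelta, h, sub_zero]
  exact congrFun WithBot.map_id _

theorem exists_deg_map_le_of_eval_eq_zero [IsOrderedAddMonoid G] [IsAddTorsionFree B]
    {R : Type*} [CommRing R] [Algebra R B]
    (hdeg : IsDegreeFunction deg) {A Z : Subring B} (hAZ : A ≤ Z)
    (hZ0 : ∀ x ∈ Z, x ≠ 0 → deg x = 0) {S : Set B} (hSne : S.Nonempty) (hSZ : S ⊆ Z)
    (D : Derivation R B B) (hDA : ∀ a ∈ A, D a = 0) {z : B} (hz : z ∈ Z) {p : B[X]}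
    (hp0 : p ≠ 0) (hp : ∀ i, p.coeff i ∈ Subring.closure (A ∪ S)) (hpz : p.eval z = 0) :
    ∃ s ∈ S, deg (D z) ≤ deg (D s) := by
  obtain ⟨q, hq, hqz, hq'z⟩ := exists_eval_derivative_ne_zero_of_coeff_mem hp0 hp hpz
  have hcl : Subring.closure (A ∪ S) ≤ Z := Subring.closure_le.2 (Set.union_subset hAZ hSZ)
  have hq'Z : q.derivative.eval z ∈ Z :=
    eval_mem_of_coeff_mem (fun i => hcl (coeff_derivative_mem_of_coeff_mem hq i)) hz
  have hZ : ∀ x ∈ Z, deg x ≤ 0 := fun x hx => by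
    rcases eq_or_ne x 0 with rfl | hx0
    · exact hdeg.deg_zero ▸ bot_le
    · exact (hZ0 x hx hx0).le
  have hDz : deg (D z) = deg (q.derivative.eval z * D z) := by
    rw [hdeg.2.1, hZ0 _ hq'Z hq'z, zero_add]
  obtain ⟨_, ⟨s, hs, rfl⟩, hle⟩ := hdeg.exists_deg_le_of_mem_span hZ (hSne.image D)
    (D.eval_derivative_mul_mem_span hAZ hSZ hDA hz hq hqz)
  exact ⟨s, hs, hDz ▸ hle⟩

end IsDegreeFunction

theorem stmt10 {B : Type*} [CommRing B] [IsDomain B] [CharZero B]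
    {G : Type*} [AddCommGroup G] [LinearOrder G] [IsOrderedAddMonoid G]
    (deg : B → WithBot G) (hdeg : IsDegreeFunction deg)
    (A Z : Subring B) (hAZ : A ≤ Z)
    (hZ0 : ∀ x ∈ Z, x ≠ 0 → deg x = 0)
    (S : Set B) (hSne : S.Nonempty) (hSZ : S ⊆ ↑Z)
    -- Z is algebraic over A[S]
    (halg : ∀ z ∈ Z, ∃ p : Polynomial B, p ≠ 0 ∧
      (∀ i : ℕ, p.coeff i ∈ Subring.closure ((A : Set B) ∪ S)) ∧
      Polynomial.eval z p = 0)
    -- D is an A-derivation of B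
    (D : B → B)
    (hDadd : ∀ x y : B, D (x + y) = D x + D y)
    (hDmul : ∀ x y : B, D (x * y) = x * D y + y * D x)
    (hDA : ∀ a ∈ A, D a = 0) :
    (∀ z ∈ Z, ∃ s ∈ S, degDelta deg D z ≤ degDelta deg D s) ∧
    ((∃ M, IsGreatest (degDelta deg D '' ↑Z) M) ↔
      (∃ M, IsGreatest (degDelta deg D '' S) M)) ∧
    (∀ M M', IsGreatest (degDelta deg D '' ↑Z) M →
      IsGreatest (degDelta deg D '' S) M' → M = M') := by
  let D' : Derivation ℤ B B := .mk' (AddMonoidHom.mk' D hDadd).toIntLinearMap hDmul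
  have hdom : ∀ z ∈ Z, ∃ s ∈ S, degDelta deg D z ≤ degDelta deg D s := by
    intro z hz
    obtain ⟨p, hp0, hp, hpz⟩ := halg z hz
    obtain ⟨s, hs, hle⟩ :=
      hdeg.exists_deg_map_le_of_eval_eq_zero hAZ hZ0 hSne hSZ D' hDA hz hp0 hp hpz
    refine ⟨s, hs, ?_⟩
    rwa [hdeg.degDelta_eq_of_deg_eq_zero D (hZ0 z hz),
      hdeg.degDelta_eq_of_deg_eq_zero D (hZ0 s (hSZ hs))]
  have hgreatest (M : WithBot G) :
      IsGreatest (degDelta deg D '' Z) M ↔ IsGreatest (degDelta deg D '' S) M := by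
    refine isGreatest_iff_of_subset_of_forall_exists_le (Set.image_mono hSZ) ?_
    rintro _ ⟨z, hz, rfl⟩
    obtain ⟨s, hs, hle⟩ := hdom z hz
    exact ⟨_, ⟨s, hs, rfl⟩, hle⟩
  exact ⟨hdom, exists_congr hgreatest, fun M M' hM hM' => hM.unique ((hgreatest M').2 hM')⟩
end

section
/- Let B be an integral domain of characteristic zero, S ⊆ B \ {0} a multiplicative set, G a totally ordered abelian group, and let deg : B → G ∪ {−∞} and DEG : S⁻¹B → G ∪ {−∞} be degree functions such that deg is the restriction of DEG. Let D : B → B be a derivation and S⁻¹D : S⁻¹B → S⁻¹B its unique extension to the localization. Then deg(D) is defined if and only if DEG(S⁻¹D) is defined, and if both are defined then deg(D) = DEG(S⁻¹D). -/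
/-!
Write `x ∈ S⁻¹B` as `b / s`. The Leibniz rule gives `s · D'x = D b - x · D s`, hence
`deg (D'x) - deg x ≤ max (deg (D b) - deg b) (deg (D s) - deg s)`. So the set
`{deg (D x) - deg x}` for `D` lies inside the one for `S⁻¹D` and is cofinal in it, and the two
sets have the same greatest elements.
-/

namespace IsDegreeFunction

variable {R : Type*} [CommRing R] {G : Type*} [AddCommGroup G] [LinearOrder G]
  {deg : R → WithBot G}

theorem ne_bot (hdeg : IsDegreeFunction deg) {x : R} (hx : x ≠ 0) : deg x ≠ ⊥ :=
  fun h => hx ((hdeg.1 x).mp h)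

theorem map_mul (hdeg : IsDegreeFunction deg) (x y : R) : deg (x * y) = deg x + deg y :=
  hdeg.2.1 x y

theorem mul_ne_zero (hdeg : IsDegreeFunction deg) {x y : R} (hx : x ≠ 0) (hy : y ≠ 0) :
    x * y ≠ 0 := fun h =>
  WithBot.add_ne_bot.mpr ⟨hdeg.ne_bot hx, hdeg.ne_bot hy⟩ (by rw [← hdeg.map_mul, hdeg.1, h])

variable [IsOrderedAddMonoid G]

theorem map_one [Nontrivial R] (hdeg : IsDegreeFunction deg) : deg (1 : R) = 0 := by
  obtain ⟨a, ha⟩ := WithBot.ne_bot_iff_exists.mp (hdeg.ne_bot one_ne_zero)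
  have h := hdeg.map_mul 1 1
  rw [one_mul, ← ha, ← WithBot.coe_add, WithBot.coe_inj] at h
  rw [← ha, left_eq_add.mp h, WithBot.coe_zero]

theorem map_neg (hdeg : IsDegreeFunction deg) (x : R) : deg (-x) = deg x := by
  rcases subsingleton_or_nontrivial R with _ | _
  · rw [Subsingleton.elim (-x) x]
  obtain ⟨a, ha⟩ := WithBot.ne_bot_iff_exists.mp (hdeg.ne_bot (neg_ne_zero.mpr one_ne_zero))
  have h := hdeg.map_mul (-1) (-1)
  rw [neg_one_mul, neg_neg, hdeg.map_one, ← ha, ← WithBot.coe_add, ← WithBot.coe_zero,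
    WithBot.coe_inj, eq_comm, ← two_nsmul, two_nsmul_eq_zero] at h
  rw [neg_eq_neg_one_mul, hdeg.map_mul, ← ha, h, WithBot.coe_zero, zero_add]

theorem map_sub_le (hdeg : IsDegreeFunction deg) (x y : R) :
    deg (x - y) ≤ max (deg x) (deg y) := by
  simpa only [← sub_eq_add_neg, hdeg.map_neg] using hdeg.2.2 x (-y)

end IsDegreeFunction

section DegDelta

variable {R : Type*} {G : Type*} [AddCommGroup G] {deg : R → WithBot G} {D : R → R}

theorem degDelta_eq_add_neg {x : R} {g : G} (hx : deg x = g) :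
    degDelta deg D x = deg (D x) + ↑(-g) := by
  rw [degDelta, hx, WithBot.unbotD_coe]
  cases deg (D x) <;> simp [sub_eq_add_neg, ← WithBot.coe_add]

theorem degDelta_le_max_of_mul [CommRing R] [LinearOrder G] [IsOrderedAddMonoid G]
    (hdeg : IsDegreeFunction deg) (hD : ∀ x y : R, D (x * y) = x * D y + y * D x) {x s : R}
    (hx : x ≠ 0) (hs : s ≠ 0) :
    degDelta deg D x ≤ max (degDelta deg D (x * s)) (degDelta deg D s) := by
  obtain ⟨ξ, hξ⟩ := WithBot.ne_bot_iff_exists.mp (hdeg.ne_bot hx)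
  obtain ⟨σ, hσ⟩ := WithBot.ne_bot_iff_exists.mp (hdeg.ne_bot hs)
  have hxs : deg (x * s) = ↑(ξ + σ) := by rw [hdeg.map_mul, ← hξ, ← hσ, WithBot.coe_add]
  have hquot : ↑σ + deg (D x) ≤ max (deg (D (x * s))) (↑ξ + deg (D s)) := by
    have hDx : s * D x = D (x * s) - x * D s := by rw [hD]; ring
    calc ↑σ + deg (D x) = deg (s * D x) := by rw [hdeg.map_mul, hσ]
      _ ≤ max (deg (D (x * s))) (deg (x * D s)) := hDx ▸ hdeg.map_sub_le _ _
      _ = max (deg (D (x * s))) (↑ξ + deg (D s)) := by rw [hdeg.map_mul, hξ]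
  rw [degDelta_eq_add_neg hξ.symm, degDelta_eq_add_neg hxs, degDelta_eq_add_neg hσ.symm]
  calc deg (D x) + ↑(-ξ) = (↑σ + deg (D x)) + ↑(-(ξ + σ)) := by
        rw [add_comm (σ : WithBot G), add_assoc, ← WithBot.coe_add]; congr 2; abel
    _ ≤ max (deg (D (x * s))) (↑ξ + deg (D s)) + ↑(-(ξ + σ)) := by gcongr
    _ = max (deg (D (x * s)) + ↑(-(ξ + σ))) (deg (D s) + ↑(-σ)) := by
        rw [max_add, add_comm (ξ : WithBot G), add_assoc, ← WithBot.coe_add]; congr 4; abel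

end DegDelta

section Restriction

variable {B B' : Type*} {G : Type*} [AddCommGroup G] {deg : B → WithBot G}
  {DEG : B' → WithBot G} {D : B → B} {D' : B' → B'} {f : B → B'}

theorem degDelta_comp (hres : ∀ b, deg b = DEG (f b)) (hext : ∀ b, D' (f b) = f (D b)) (b : B) :
    degDelta DEG D' (f b) = degDelta deg D b := by
  simp only [degDelta, hext, ← hres]

theorem degDeltaSet_subset_of_comp [CommRing B] [CommRing B'] [LinearOrder G]
    (hdeg : IsDegreeFunction deg) (hDEG : IsDegreeFunction DEG)
    (hres : ∀ b, deg b = DEG (f b)) (hext : ∀ b, D' (f b) = f (D b)) :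
    degDeltaSet deg D ⊆ degDeltaSet DEG D' := by
  rintro _ ⟨b, hb, rfl⟩
  exact ⟨f b, fun h => hdeg.ne_bot hb (by rw [hres, hDEG.1, h]), degDelta_comp hres hext b⟩

end Restriction

theorem isGreatest_iff_of_subset_of_forall_exists_le_s14 {α : Type*} [PartialOrder α] {A A' : Set α}
    (hsub : A ⊆ A') (hcof : ∀ m ∈ A', ∃ n ∈ A, m ≤ n) {M : α} :
    IsGreatest A M ↔ IsGreatest A' M := by
  constructor
  · rintro ⟨hM, hub⟩
    refine ⟨hsub hM, fun m hm => ?_⟩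
    obtain ⟨n, hn, hmn⟩ := hcof m hm
    exact hmn.trans (hub hn)
  · rintro ⟨hM, hub⟩
    obtain ⟨n, hn, hMn⟩ := hcof M hM
    obtain rfl : n = M := le_antisymm (hub (hsub hn)) hMn
    exact ⟨hn, fun m hm => hub (hsub hm)⟩

theorem exists_degDelta_le_of_isLocalization {B B' G : Type*} [CommRing B] [CommRing B']
    [Algebra B B'] (S : Submonoid B) (hS : (0 : B) ∉ S) [IsLocalization S B']
    [AddCommGroup G] [LinearOrder G] [IsOrderedAddMonoid G]
    {deg : B → WithBot G} (hdeg : IsDegreeFunction deg)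
    {DEG : B' → WithBot G} (hDEG : IsDegreeFunction DEG)
    (hres : ∀ b : B, deg b = DEG (algebraMap B B' b)) {D : B → B} {D' : B' → B'}
    (hD'mul : ∀ x y : B', D' (x * y) = x * D' y + y * D' x)
    (hext : ∀ b : B, D' (algebraMap B B' b) = algebraMap B B' (D b)) :
    ∀ m ∈ degDeltaSet DEG D', ∃ n ∈ degDeltaSet deg D, m ≤ n := by
  rintro _ ⟨x, hx, rfl⟩
  obtain ⟨⟨b, s⟩, hbs⟩ := IsLocalization.surj S x
  have hs : (s : B) ≠ 0 := fun h => hS (h ▸ s.2)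
  have hs' : algebraMap B B' s ≠ 0 := fun h => hdeg.ne_bot hs (by rw [hres, hDEG.1, h])
  have hb : b ≠ 0 := by
    rintro rfl
    exact hDEG.mul_ne_zero hx hs' (hbs.trans (map_zero _))
  refine ⟨max (degDelta deg D b) (degDelta deg D s), ?_, ?_⟩
  · rcases max_choice (degDelta deg D b) (degDelta deg D s) with h | h <;> rw [h]
    exacts [⟨b, hb, rfl⟩, ⟨s, hs, rfl⟩]
  · have := degDelta_le_max_of_mul hDEG hD'mul hx hs'
    rwa [hbs, degDelta_comp hres hext, degDelta_comp hres hext] at this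

theorem stmt14_general {B B' G : Type*} [CommRing B]
    [CommRing B'] [Algebra B B']
    (S : Submonoid B) (hS : (0 : B) ∉ S) [IsLocalization S B']
    [AddCommGroup G] [LinearOrder G] [IsOrderedAddMonoid G]
    (deg : B → WithBot G) (hdeg : IsDegreeFunction deg)
    (DEG : B' → WithBot G) (hDEG : IsDegreeFunction DEG)
    (hres : ∀ b : B, deg b = DEG (algebraMap B B' b))
    -- D is a derivation of B
    (D : B → B)
    -- D' is its (unique) extension to the localization S⁻¹B
    (D' : B' → B')
    (hD'mul : ∀ x y : B', D' (x * y) = x * D' y + y * D' x)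
    (hext : ∀ b : B, D' (algebraMap B B' b) = algebraMap B B' (D b)) :
    ((∃ M, IsGreatest (degDeltaSet deg D) M) ↔
      (∃ M, IsGreatest (degDeltaSet DEG D') M)) ∧
    (∀ M M', IsGreatest (degDeltaSet deg D) M →
      IsGreatest (degDeltaSet DEG D') M' → M = M') := by
  have hsub := degDeltaSet_subset_of_comp hdeg hDEG hres (D := D) hext
  have hcof := exists_degDelta_le_of_isLocalization S hS hdeg hDEG hres hD'mul hext
  have hiff := fun M => isGreatest_iff_of_subset_of_forall_exists_le_s14 hsub hcof (M := M)
  exact ⟨exists_congr hiff, fun M M' hM hM' => ((hiff M).mp hM).unique hM'⟩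

theorem stmt14 {B B' G : Type*} [CommRing B] [IsDomain B] [CharZero B]
    [CommRing B'] [Algebra B B']
    (S : Submonoid B) (hS : (0 : B) ∉ S) [IsLocalization S B']
    [AddCommGroup G] [LinearOrder G] [IsOrderedAddMonoid G]
    (deg : B → WithBot G) (hdeg : IsDegreeFunction deg)
    (DEG : B' → WithBot G) (hDEG : IsDegreeFunction DEG)
    (hres : ∀ b : B, deg b = DEG (algebraMap B B' b))
    -- D is a derivation of B
    (D : B → B)
    (hDadd : ∀ x y : B, D (x + y) = D x + D y)
    (hDmul : ∀ x y : B, D (x * y) = x * D y + y * D x)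
    -- D' is its (unique) extension to the localization S⁻¹B
    (D' : B' → B')
    (hD'add : ∀ x y : B', D' (x + y) = D' x + D' y)
    (hD'mul : ∀ x y : B', D' (x * y) = x * D' y + y * D' x)
    (hext : ∀ b : B, D' (algebraMap B B' b) = algebraMap B B' (D b)) :
    ((∃ M, IsGreatest (degDeltaSet deg D) M) ↔
      (∃ M, IsGreatest (degDeltaSet DEG D') M)) ∧
    (∀ M M', IsGreatest (degDeltaSet deg D) M →
      IsGreatest (degDeltaSet DEG D') M' → M = M') :=
  stmt14_general S hS deg hdeg DEG hDEG hres D D' hD'mul hext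
end
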